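/- arXiv:1203.5377 — 6 statements merged into one kernel-verified Lean document; each statement's English description precedes it below -/
import Mathlib

section
/- Let A and B be strictly positive definite m×m complex matrices. Define the linear map (A,B)# on m×m matrices by (A,B)#C = ∫₀¹ A^{1-s} C B^s ds, and the linear map (A,B)♯̂ by (A,B)♯̂C = ∫₀^∞ (A+xI)^{-1} C (B+xI)^{-1} dx. Then (A,B)♯̂ is the inverse of (A,B)#: for every m×m matrix C, (A,B)♯̂((A,B)#C) = C. -/
/-
Write `A = U diag(α) U*` and `B = V diag(β) V*`. In these eigenbases both `(A,B)#` and
`(A,B)♯̂` act on `U* C V` as Hadamard (Schur) multipliers, with symbols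
`∫₀¹ αᵢ^(1-s) βⱼ^s ds` and `∫₀^∞ (αᵢ+x)⁻¹ (βⱼ+x)⁻¹ dx`. The first is the logarithmic mean
`(βⱼ - αᵢ) / (log βⱼ - log αᵢ)` (or `αᵢ` when `αᵢ = βⱼ`) and the second is its reciprocal, so the
composite multiplier is identically `1`.
-/

open MeasureTheory Matrix
open scoped ComplexOrder

attribute [local instance] Matrix.frobeniusNormedAddCommGroup Matrix.frobeniusNormedSpace

variable {m : ℕ}

/-- `(A,B)#C = ∫₀¹ A^{1-s} C B^s ds`, with powers by functional calculus. -/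
noncomputable def matSharp (A B C : Matrix (Fin m) (Fin m) ℂ) : Matrix (Fin m) (Fin m) ℂ :=
  ∫ s in (0:ℝ)..1,
    cfc (fun t : ℝ => t ^ (1 - s)) A * C * cfc (fun t : ℝ => t ^ s) B

/-- `(A,B)♯̂C = ∫₀^∞ (A+xI)⁻¹ C (B+xI)⁻¹ dx`. -/
noncomputable def matSharpHat (A B C : Matrix (Fin m) (Fin m) ℂ) : Matrix (Fin m) (Fin m) ℂ :=
  ∫ x in Set.Ioi (0:ℝ), (A + (x : ℂ) • 1)⁻¹ * C * (B + (x : ℂ) • 1)⁻¹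

namespace Real

open Set Filter Topology

variable {a b : ℝ}

theorem rpow_one_sub_mul_rpow (ha : 0 < a) (hb : 0 < b) (s : ℝ) :
    a ^ (1 - s) * b ^ s = a * exp ((log b - log a) * s) := by
  rw [rpow_def_of_pos ha, rpow_def_of_pos hb, ← exp_add]
  conv_rhs => arg 1; rw [← exp_log ha]
  rw [← exp_add]
  ring_nf

theorem log_sub_log_ne_zero (ha : 0 < a) (hb : 0 < b) (hab : a ≠ b) : log b - log a ≠ 0 :=
  sub_ne_zero.2 fun h => hab (log_injOn_pos ha hb h.symm)

theorem integral_rpow_one_sub_mul_rpow (ha : 0 < a) (hb : 0 < b) (hab : a ≠ b) :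
    ∫ s in (0 : ℝ)..1, a ^ (1 - s) * b ^ s = (b - a) / (log b - log a) := by
  have hc := log_sub_log_ne_zero ha hb hab
  simp_rw [rpow_one_sub_mul_rpow ha hb, intervalIntegral.integral_const_mul,
    intervalIntegral.integral_comp_mul_left (fun x => exp x) hc, integral_exp, mul_zero, mul_one,
    exp_zero, exp_sub, exp_log ha, exp_log hb, smul_eq_mul]
  field_simp

theorem tendsto_log_add_sub_log_add_div (a b c : ℝ) :
    Tendsto (fun y => (log (a + y) - log (b + y)) / c) atTop (𝓝 0) := by
  have := ((tendsto_log_comp_add_sub_log a).sub (tendsto_log_comp_add_sub_log b)).div_const c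
  simpa [add_comm] using this

theorem hasDerivAt_neg_inv_add (x : ℝ) (h : a + x ≠ 0) :
    HasDerivAt (fun y => -(a + y)⁻¹) ((a + x)⁻¹ * (a + x)⁻¹) x := by
  refine (((hasDerivAt_id x).const_add a).inv h).neg.congr_deriv ?_
  simp only [id]
  field_simp

theorem hasDerivAt_log_add_sub_log_add_div (hab : a ≠ b) {x : ℝ} (ha : 0 < a + x)
    (hb : 0 < b + x) :
    HasDerivAt (fun y => (log (a + y) - log (b + y)) / (b - a)) ((a + x)⁻¹ * (b + x)⁻¹) x := by
  have hlog : ∀ c, 0 < c + x → HasDerivAt (fun y => log (c + y)) (c + x)⁻¹ x := fun c hc => by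
    simpa using ((hasDerivAt_id x).const_add c).log hc.ne'
  refine (((hlog a ha).sub (hlog b hb)).div_const (b - a)).congr_deriv ?_
  field_simp [sub_ne_zero.2 hab.symm]
  ring

theorem tendsto_neg_inv_add_atTop (a : ℝ) : Tendsto (fun y => -(a + y)⁻¹) atTop (𝓝 0) := by
  simpa using (tendsto_inv_atTop_zero.comp (tendsto_atTop_add_const_left atTop a tendsto_id)).neg

theorem inv_add_mul_inv_add_nonneg (ha : 0 < a) (hb : 0 < b) :
    ∀ x ∈ Ioi (0 : ℝ), 0 ≤ (a + x)⁻¹ * (b + x)⁻¹ := fun x (hx : 0 < x) => by positivity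

theorem integrableOn_inv_add_mul_inv_add (ha : 0 < a) (hb : 0 < b) :
    IntegrableOn (fun x => (a + x)⁻¹ * (b + x)⁻¹) (Ioi 0) := by
  rcases eq_or_ne a b with rfl | hab
  · exact integrableOn_Ioi_deriv_of_nonneg' (fun x (hx : 0 ≤ x) =>
      hasDerivAt_neg_inv_add x (by positivity)) (inv_add_mul_inv_add_nonneg ha ha)
      (tendsto_neg_inv_add_atTop a)
  · exact integrableOn_Ioi_deriv_of_nonneg' (fun x (hx : 0 ≤ x) =>
      hasDerivAt_log_add_sub_log_add_div hab (by positivity) (by positivity))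
      (inv_add_mul_inv_add_nonneg ha hb)
      (tendsto_log_add_sub_log_add_div a b (b - a))

theorem integral_inv_add_mul_inv_add_self (ha : 0 < a) :
    ∫ x in Ioi (0 : ℝ), (a + x)⁻¹ * (a + x)⁻¹ = a⁻¹ := by
  rw [integral_Ioi_of_hasDerivAt_of_nonneg' (fun x (hx : 0 ≤ x) =>
      hasDerivAt_neg_inv_add x (by positivity)) (inv_add_mul_inv_add_nonneg ha ha)
      (tendsto_neg_inv_add_atTop a)]
  simp

theorem integral_inv_add_mul_inv_add (ha : 0 < a) (hb : 0 < b) (hab : a ≠ b) :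
    ∫ x in Ioi (0 : ℝ), (a + x)⁻¹ * (b + x)⁻¹ = (log b - log a) / (b - a) := by
  rw [integral_Ioi_of_hasDerivAt_of_nonneg' (fun x (hx : 0 ≤ x) =>
      hasDerivAt_log_add_sub_log_add_div hab (by positivity) (by positivity))
      (inv_add_mul_inv_add_nonneg ha hb)
      (tendsto_log_add_sub_log_add_div a b (b - a))]
  simp only [add_zero]
  ring

theorem integral_inv_add_mul_inv_add_mul_integral_rpow (ha : 0 < a) (hb : 0 < b) :
    (∫ x in Ioi (0 : ℝ), (a + x)⁻¹ * (b + x)⁻¹) * ∫ s in (0 : ℝ)..1, a ^ (1 - s) * b ^ s = 1 := by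
  rcases eq_or_ne a b with rfl | hab
  · simp_rw [integral_inv_add_mul_inv_add_self ha, ← rpow_add ha, sub_add_cancel, rpow_one,
      intervalIntegral.integral_const, sub_zero, one_smul, inv_mul_cancel₀ ha.ne']
  · rw [integral_inv_add_mul_inv_add ha hb hab, integral_rpow_one_sub_mul_rpow ha hb hab]
    field_simp [log_sub_log_ne_zero ha hb hab, sub_ne_zero.2 hab.symm]

end Real

namespace Matrix

variable {l l' n n' R 𝕜 : Type*}

theorem hadamard_hadamard_of_mul_eq_one [Monoid R] {K L D : Matrix n n' R}
    (h : ∀ i j, K i j * L i j = 1) : K ⊙ L ⊙ D = D := by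
  ext i j
  simp [h]

section CommSemiring

variable [CommSemiring R] [Fintype n] [DecidableEq n] [Fintype n'] [DecidableEq n']

theorem diagonal_mul_mul_diagonal (d : n → R) (e : n' → R) (X : Matrix n n' R) :
    diagonal d * X * diagonal e = of (fun i j => d i * e j) ⊙ X := by
  ext i j
  simp [diagonal_mul, mul_diagonal, mul_comm, mul_left_comm]

theorem mul_hadamard_mul_eq_sum (U : Matrix l n R) (K D : Matrix n n' R) (W : Matrix n' l' R) :
    U * (K ⊙ D) * W = ∑ i, ∑ j, K i j • (U * single i j (D i j) * W) := by
  conv_lhs => rw [matrix_eq_sum_single (K ⊙ D)]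
  simp only [Matrix.mul_sum, Matrix.sum_mul, hadamard_apply, ← smul_eq_mul, ← smul_single,
    Matrix.mul_smul, Matrix.smul_mul]

end CommSemiring

variable [RCLike 𝕜] [Fintype n] [DecidableEq n] [Fintype n'] [DecidableEq n']

theorem integral_mul_hadamard_mul [Fintype l] [Fintype l'] {α : Type*} [MeasurableSpace α]
    {μ : Measure α} (U : Matrix l n 𝕜) (k : α → n → n' → ℝ)
    (hk : ∀ i j, Integrable (fun t => k t i j) μ) (D : Matrix n n' 𝕜) (W : Matrix n' l' 𝕜) :
    ∫ t, U * (of (fun i j => (k t i j : 𝕜)) ⊙ D) * W ∂μ =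
      U * (of (fun i j => ((∫ t, k t i j ∂μ : ℝ) : 𝕜)) ⊙ D) * W := by
  have hk' : ∀ i j, Integrable (fun t => (k t i j : 𝕜)) μ := fun i j => (hk i j).ofReal
  simp only [mul_hadamard_mul_eq_sum, of_apply]
  rw [integral_finsetSum _ fun i _ => integrable_finsetSum _ fun j _ => (hk' i j).smul_const _]
  refine Finset.sum_congr rfl fun i _ => ?_
  rw [integral_finsetSum _ fun j _ => (hk' i j).smul_const _]
  refine Finset.sum_congr rfl fun j _ => ?_
  rw [integral_smul_const]
  congr 1
  exact integral_ofReal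

theorem IsHermitian.cfc_mul_mul_cfc {A : Matrix n n 𝕜} {B : Matrix n' n' 𝕜} (hA : A.IsHermitian)
    (hB : B.IsHermitian) (f g : ℝ → ℝ) (X : Matrix n n' 𝕜) :
    cfc f A * X * cfc g B =
      (hA.eigenvectorUnitary : Matrix n n 𝕜) *
        (of (fun i j => ((f (hA.eigenvalues i) * g (hB.eigenvalues j) : ℝ) : 𝕜)) ⊙
          (star (hA.eigenvectorUnitary : Matrix n n 𝕜) * X *
            (hB.eigenvectorUnitary : Matrix n' n' 𝕜))) *
        star (hB.eigenvectorUnitary : Matrix n' n' 𝕜) := by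
  have hK : of (fun i j => ((f (hA.eigenvalues i) * g (hB.eigenvalues j) : ℝ) : 𝕜)) =
      of fun i j => (RCLike.ofReal ∘ f ∘ hA.eigenvalues) i *
        (RCLike.ofReal ∘ g ∘ hB.eigenvalues) j := by
    ext
    simp
  rw [hA.cfc_eq, hB.cfc_eq, IsHermitian.cfc, IsHermitian.cfc, Unitary.conjStarAlgAut_apply,
    Unitary.conjStarAlgAut_apply, hK, ← diagonal_mul_mul_diagonal]
  simp only [Matrix.mul_assoc]

theorem PosSemidef.inv_add_smul_one {A : Matrix n n 𝕜} (hA : A.PosSemidef) {x : ℝ} (hx : 0 < x) :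
    (A + (x : 𝕜) • 1)⁻¹ = cfc (fun t : ℝ => (t + x)⁻¹) A := by
  have hpos : ∀ t ∈ spectrum ℝ A, t + x ≠ 0 := by
    intro t ht
    obtain ⟨i, rfl⟩ := hA.1.spectrum_real_eq_range_eigenvalues ▸ ht
    exact (add_pos_of_nonneg_of_pos (hA.eigenvalues_nonneg i) hx).ne'
  have hA' : IsSelfAdjoint A := hA.1
  rw [cfc_inv (fun t => t + x) A hpos, cfc_add_const x (fun t => t) A, cfc_id' ℝ A,
    nonsing_inv_eq_ringInverse, Algebra.algebraMap_eq_smul_one,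
    RCLike.real_smul_eq_coe_smul (K := 𝕜)]

end Matrix

theorem Unitary.star_mul_mul_star_mul {R : Type*} [Monoid R] [StarMul R] (u v : unitary R)
    (z : R) : star (u : R) * (u * z * star (v : R)) * v = z := by
  rw [← mul_assoc, ← mul_assoc, star_mul_self_of_mem u.2, one_mul, mul_assoc,
    star_mul_self_of_mem v.2, mul_one]

theorem Unitary.mul_star_mul_mul_star {R : Type*} [Monoid R] [StarMul R] (u v : unitary R)
    (z : R) : (u : R) * (star (u : R) * z * v) * star (v : R) = z := by
  rw [← mul_assoc, ← mul_assoc, mul_star_self_of_mem u.2, one_mul, mul_assoc,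
    mul_star_self_of_mem v.2, mul_one]

section Eigenbasis

variable {A B : Matrix (Fin m) (Fin m) ℂ}

theorem matSharp_eq (hA : A.PosDef) (hB : B.PosDef) (C : Matrix (Fin m) (Fin m) ℂ) :
    matSharp A B C = (hA.1.eigenvectorUnitary : Matrix (Fin m) (Fin m) ℂ) *
      (of (fun i j => ((∫ s in (0 : ℝ)..1,
          hA.1.eigenvalues i ^ (1 - s) * hB.1.eigenvalues j ^ s : ℝ) : ℂ)) ⊙
        (star (hA.1.eigenvectorUnitary : Matrix (Fin m) (Fin m) ℂ) * C *
          (hB.1.eigenvectorUnitary : Matrix (Fin m) (Fin m) ℂ))) *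
      star (hB.1.eigenvectorUnitary : Matrix (Fin m) (Fin m) ℂ) := by
  have hint : ∀ i j, IntegrableOn
      (fun s : ℝ => hA.1.eigenvalues i ^ (1 - s) * hB.1.eigenvalues j ^ s) (Set.Ioc 0 1) := by
    intro i j
    have := (hA.eigenvalues_pos i).ne'
    have := (hB.eigenvalues_pos j).ne'
    exact (by fun_prop (disch := assumption) : Continuous _).integrableOn_Ioc
  simp only [matSharp, hA.1.cfc_mul_mul_cfc hB.1, intervalIntegral.integral_of_le zero_le_one]
  exact integral_mul_hadamard_mul _ _ hint _ _

theorem matSharpHat_eq (hA : A.PosDef) (hB : B.PosDef) (C : Matrix (Fin m) (Fin m) ℂ) :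
    matSharpHat A B C = (hA.1.eigenvectorUnitary : Matrix (Fin m) (Fin m) ℂ) *
      (of (fun i j => ((∫ x in Set.Ioi (0 : ℝ),
          (hA.1.eigenvalues i + x)⁻¹ * (hB.1.eigenvalues j + x)⁻¹ : ℝ) : ℂ)) ⊙
        (star (hA.1.eigenvectorUnitary : Matrix (Fin m) (Fin m) ℂ) * C *
          (hB.1.eigenvectorUnitary : Matrix (Fin m) (Fin m) ℂ))) *
      star (hB.1.eigenvectorUnitary : Matrix (Fin m) (Fin m) ℂ) := by
  -- `matSharpHat` casts `x` with `Complex.ofReal`, `inv_add_smul_one` with `RCLike.ofReal`.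
  rw [matSharpHat, setIntegral_congr_fun measurableSet_Ioi fun x (hx : 0 < x) => by
    rw [← RCLike.ofReal_eq_complex_ofReal, hA.posSemidef.inv_add_smul_one hx,
      hB.posSemidef.inv_add_smul_one hx, hA.1.cfc_mul_mul_cfc hB.1]]
  exact integral_mul_hadamard_mul _ _ (fun i j =>
    Real.integrableOn_inv_add_mul_inv_add (hA.eigenvalues_pos i) (hB.eigenvalues_pos j)) _ _

end Eigenbasis

/-- For strictly positive definite `A`, `B`, the map `(A,B)♯̂` inverts `(A,B)#`. -/
theorem matSharpHat_matSharp (A B : Matrix (Fin m) (Fin m) ℂ)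
    (hA : A.PosDef) (hB : B.PosDef) (C : Matrix (Fin m) (Fin m) ℂ) :
    matSharpHat A B (matSharp A B C) = C := by
  rw [matSharpHat_eq hA hB, matSharp_eq hA hB, Unitary.star_mul_mul_star_mul, ← hadamard_assoc,
    hadamard_hadamard_of_mul_eq_one, Unitary.mul_star_mul_mul_star]
  intro i j
  simp only [of_apply, ← Complex.ofReal_mul, Complex.ofReal_eq_one,
    Real.integral_inv_add_mul_inv_add_mul_integral_rpow (hA.eigenvalues_pos i)
      (hB.eigenvalues_pos j)]
end

section
/- Let A and B be m×m Hermitian matrices with A ≥ εI and B ≥ εI for some ε > 0. Then for every m×m matrix C: ε·tr[C* ((A,B)♯̂ C)] ≤ tr[C*C] ≤ (1/ε)·tr[C* ((A,B)# C)]. -/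
/-! For positive `X, Y` the form `(X, Y) ↦ Re tr[C* X C Y]` is nonnegative (write `Y = S²` and
recognise `tr[(CS)* X (CS)]`), hence monotone in each argument for the Loewner order, and on
scalars `aI, bI` it equals `a b tr[C*C]`. Since `A, B ≥ εI`, functional calculus gives
`A^{1-s} ≥ ε^{1-s} I`, `B^s ≥ ε^s I`, `0 ≤ (A + x)⁻¹ ≤ (ε + x)⁻¹ I` and likewise for `B`.
So the integrand of `C* ((A,B)# C)` has trace at least `ε tr[C*C]` for every `s ∈ [0,1]`, and
that of `C* ((A,B)♯̂ C)` has trace at most `(ε + x)⁻² tr[C*C]`, whose integral over `x > 0` is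
`ε⁻¹ tr[C*C]`. -/

open MeasureTheory Matrix
open scoped ComplexOrder

attribute [local instance] Matrix.frobeniusNormedAddCommGroup Matrix.frobeniusNormedSpace

variable {m : ℕ}

open Set Filter Topology
open scoped MatrixOrder

theorem IsSelfAdjoint.of_algebraMap_le {R A : Type*} [CommSemiring R] [StarRing R]
    [TrivialStar R] [Ring A] [StarRing A] [PartialOrder A] [StarOrderedRing A] [Algebra R A]
    [StarModule R A] {r : R} {a : A} (h : algebraMap R A r ≤ a) : IsSelfAdjoint a := by
  simpa using (IsSelfAdjoint.of_nonneg (sub_nonneg.mpr h)).add (.algebraMap A (.all r))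

theorem hasDerivAt_neg_inv_add {a x : ℝ} (h : a + x ≠ 0) :
    HasDerivAt (fun y => -(a + y)⁻¹) ((a + x) ^ 2)⁻¹ x := by
  have h' := (((hasDerivAt_id x).const_add a).inv h).neg
  rwa [neg_div, neg_neg, one_div] at h'

theorem tendsto_neg_inv_add_atTop (a : ℝ) : Tendsto (fun y => -(a + y)⁻¹) atTop (𝓝 0) := by
  simpa using (tendsto_inv_atTop_zero.comp (tendsto_atTop_add_const_left _ a tendsto_id)).neg

theorem integrableOn_Ioi_inv_add_sq {a : ℝ} (ha : 0 < a) :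
    IntegrableOn (fun x => ((a + x) ^ 2)⁻¹) (Ioi 0) :=
  integrableOn_Ioi_deriv_of_nonneg' (fun x hx => hasDerivAt_neg_inv_add (by linarith [hx.out]))
    (fun _ _ => by positivity) (tendsto_neg_inv_add_atTop a)

theorem integral_Ioi_inv_add_sq {a : ℝ} (ha : 0 < a) :
    ∫ x in Ioi 0, ((a + x) ^ 2)⁻¹ = a⁻¹ := by
  rw [integral_Ioi_of_hasDerivAt_of_nonneg'
    (fun x hx => hasDerivAt_neg_inv_add (by linarith [hx.out])) (fun _ _ => by positivity)
    (tendsto_neg_inv_add_atTop a)]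
  simp

theorem LinearMap.apply_setIntegral_le {α E : Type*} [MeasurableSpace α] {μ : Measure α}
    [NormedAddCommGroup E] [NormedSpace ℝ E] [FiniteDimensional ℝ E] (L : E →ₗ[ℝ] ℝ)
    {f : α → E} {g : α → ℝ} {s : Set α} (hs : MeasurableSet s) (hg : IntegrableOn g s μ)
    (hfg : ∀ x ∈ s, L (f x) ≤ g x) (hg₀ : 0 ≤ ∫ x in s, g x ∂μ) :
    L (∫ x in s, f x ∂μ) ≤ ∫ x in s, g x ∂μ := by
  have := FiniteDimensional.complete ℝ E
  by_cases hf : IntegrableOn f s μ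
  · rw [← L.coe_toContinuousLinearMap', ← L.toContinuousLinearMap.integral_comp_comm hf]
    exact setIntegral_mono_on (L.toContinuousLinearMap.integrable_comp hf) hg hs hfg
  · -- a non-integrable `f` has integral `0`, which is where `hg₀` is needed
    simpa [integral_undef hf] using hg₀

theorem LinearMap.le_apply_intervalIntegral {E : Type*} [NormedAddCommGroup E] [NormedSpace ℝ E]
    [FiniteDimensional ℝ E] (L : E →ₗ[ℝ] ℝ) {f : ℝ → E} (hf : Continuous f) {a b c : ℝ}
    (hab : a ≤ b) (hfc : ∀ s ∈ Icc a b, c ≤ L (f s)) : (b - a) * c ≤ L (∫ s in a..b, f s) := by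
  have := FiniteDimensional.complete ℝ E
  rw [← L.coe_toContinuousLinearMap', ← L.toContinuousLinearMap.intervalIntegral_comp_comm
    (hf.intervalIntegrable a b), ← smul_eq_mul, ← intervalIntegral.integral_const]
  exact intervalIntegral.integral_mono_on hab intervalIntegrable_const
    ((L.toContinuousLinearMap.continuous.comp hf).intervalIntegrable a b) hfc

namespace Matrix

variable {n : Type*} [Fintype n]

noncomputable def reTraceConjTransposeMul (C : Matrix n n ℂ) : Matrix n n ℂ →ₗ[ℝ] ℝ :=
  Complex.reLm ∘ₗ (traceLinearMap n ℂ ℂ).restrictScalars ℝ ∘ₗ LinearMap.mulLeft ℝ Cᴴ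

theorem reTraceConjTransposeMul_apply (C M : Matrix n n ℂ) :
    reTraceConjTransposeMul C M = (Cᴴ * M).trace.re := rfl

theorem re_trace_conjTranspose_mul_mul_mul_nonneg {X Y : Matrix n n ℂ} (hX : 0 ≤ X) (hY : 0 ≤ Y)
    (C : Matrix n n ℂ) : 0 ≤ (Cᴴ * (X * C * Y)).trace.re := by
  classical
  obtain ⟨S, hSa, rfl⟩ : ∃ S : Matrix n n ℂ, IsSelfAdjoint S ∧ Y = S * S :=
    ⟨CFC.sqrt Y, .of_nonneg (CFC.sqrt_nonneg Y), (CFC.sqrt_mul_sqrt_self Y hY).symm⟩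
  have htr : (Cᴴ * (X * C * (S * S))).trace = (star (C * S) * X * (C * S)).trace := by
    rw [star_mul, hSa.star_eq, star_eq_conjTranspose,
      show Cᴴ * (X * C * (S * S)) = (Cᴴ * X * C * S) * S by noncomm_ring, trace_mul_comm]
    noncomm_ring
  rw [htr]
  exact (Complex.nonneg_iff.mp (star_left_conjugate_nonneg hX _).posSemidef.trace_nonneg).1

theorem re_trace_conjTranspose_mul_mul_mul_mono {X₁ X₂ Y₁ Y₂ : Matrix n n ℂ} (hX₁ : 0 ≤ X₁)
    (hX : X₁ ≤ X₂) (hY₁ : 0 ≤ Y₁) (hY : Y₁ ≤ Y₂) (C : Matrix n n ℂ) :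
    (Cᴴ * (X₁ * C * Y₁)).trace.re ≤ (Cᴴ * (X₂ * C * Y₂)).trace.re := by
  have hsplit : Cᴴ * (X₂ * C * Y₂) - Cᴴ * (X₁ * C * Y₁) =
      Cᴴ * ((X₂ - X₁) * C * Y₂) + Cᴴ * (X₁ * C * (Y₂ - Y₁)) := by noncomm_ring
  have h := add_nonneg
    (re_trace_conjTranspose_mul_mul_mul_nonneg (sub_nonneg.mpr hX) (hY₁.trans hY) C)
    (re_trace_conjTranspose_mul_mul_mul_nonneg hX₁ (sub_nonneg.mpr hY) C)
  rw [← Complex.add_re, ← trace_add, ← hsplit, trace_sub, Complex.sub_re] at h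
  linarith

theorem re_trace_conjTranspose_mul_algebraMap_mul_mul_algebraMap [DecidableEq n] (a b : ℝ)
    (C : Matrix n n ℂ) :
    (Cᴴ * (algebraMap ℝ _ a * C * algebraMap ℝ _ b)).trace.re = a * b * (Cᴴ * C).trace.re := by
  simp only [Algebra.algebraMap_eq_smul_one, Matrix.smul_mul, Matrix.mul_smul, Matrix.one_mul,
    Matrix.mul_one, smul_smul, trace_smul, Complex.smul_re, smul_eq_mul]
  ring

variable [DecidableEq n] {A : Matrix n n ℂ} {ε : ℝ}

theorem ofReal_smul_one_eq_algebraMap (x : ℝ) :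
    (x : ℂ) • (1 : Matrix n n ℂ) = algebraMap ℝ _ x := by
  rw [Algebra.algebraMap_eq_smul_one, Complex.coe_smul]

theorem le_of_algebraMap_le_of_mem_spectrum {r t : ℝ} (hA : algebraMap ℝ _ r ≤ A)
    (ht : t ∈ spectrum ℝ A) : r ≤ t :=
  (algebraMap_le_iff_le_spectrum (IsSelfAdjoint.of_algebraMap_le hA)).mp hA t ht

theorem inv_add_algebraMap_eq_cfc (hA : IsSelfAdjoint A) {x : ℝ}
    (hx : ∀ t ∈ spectrum ℝ A, t + x ≠ 0) :
    (A + algebraMap ℝ _ x)⁻¹ = cfc (fun t => (t + x)⁻¹) A := by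
  rw [cfc_inv (fun t => t + x) A hx, cfc_add_const x (fun t => t) A, cfc_id' ℝ A,
    nonsing_inv_eq_ringInverse]

theorem inv_add_algebraMap_nonneg (hε : 0 < ε) (hA : algebraMap ℝ _ ε ≤ A) {x : ℝ} (hx : 0 ≤ x) :
    0 ≤ (A + algebraMap ℝ _ x)⁻¹ := by
  have hspec t (ht : t ∈ spectrum ℝ A) := le_of_algebraMap_le_of_mem_spectrum hA ht
  rw [inv_add_algebraMap_eq_cfc (.of_algebraMap_le hA) fun t ht => by linarith [hspec t ht]]
  exact cfc_nonneg fun t ht => inv_nonneg.mpr (by linarith [hspec t ht])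

theorem inv_add_algebraMap_le (hε : 0 < ε) (hA : algebraMap ℝ _ ε ≤ A) {x : ℝ} (hx : 0 ≤ x) :
    (A + algebraMap ℝ _ x)⁻¹ ≤ algebraMap ℝ _ (ε + x)⁻¹ := by
  have hspec t (ht : t ∈ spectrum ℝ A) := le_of_algebraMap_le_of_mem_spectrum hA ht
  rw [inv_add_algebraMap_eq_cfc (.of_algebraMap_le hA) fun t ht => by linarith [hspec t ht]]
  exact cfc_le_algebraMap _ _ A (fun t ht => inv_anti₀ (by positivity) (by linarith [hspec t ht]))
    (A.finite_real_spectrum.continuousOn _) (.of_algebraMap_le hA)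

theorem algebraMap_rpow_le_cfc_rpow (hε : 0 ≤ ε) (hA : algebraMap ℝ _ ε ≤ A) {p : ℝ} (hp : 0 ≤ p) :
    algebraMap ℝ _ (ε ^ p) ≤ cfc (fun t : ℝ => t ^ p) A :=
  algebraMap_le_cfc _ _ A
    (fun _ ht => Real.rpow_le_rpow hε (le_of_algebraMap_le_of_mem_spectrum hA ht) hp)
    (A.finite_real_spectrum.continuousOn _) (.of_algebraMap_le hA)

theorem IsHermitian.continuous_cfc_fun {X : Type*} [TopologicalSpace X] (hA : A.IsHermitian)
    {f : X → ℝ → ℝ} (hf : ∀ t ∈ spectrum ℝ A, Continuous fun x => f x t) :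
    Continuous fun x => cfc (f x) A := by
  simp_rw [hA.cfc_eq, IsHermitian.cfc, Unitary.conjStarAlgAut_apply]
  have := fun i => hf _ (hA.eigenvalues_mem_spectrum_real i)
  fun_prop

theorem continuous_cfc_rpow (hε : 0 < ε) (hA : algebraMap ℝ _ ε ≤ A) {f : ℝ → ℝ}
    (hf : Continuous f) : Continuous fun s => cfc (fun t : ℝ => t ^ f s) A :=
  (IsSelfAdjoint.of_algebraMap_le hA).isHermitian.continuous_cfc_fun fun _ ht =>
    (Real.continuous_const_rpow
      (hε.trans_le (le_of_algebraMap_le_of_mem_spectrum hA ht)).ne').comp hf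

theorem re_trace_resolvent_sandwich_le {B : Matrix n n ℂ} (hε : 0 < ε) (hA : algebraMap ℝ _ ε ≤ A)
    (hB : algebraMap ℝ _ ε ≤ B) {x : ℝ} (hx : 0 ≤ x) (C : Matrix n n ℂ) :
    (Cᴴ * ((A + algebraMap ℝ _ x)⁻¹ * C * (B + algebraMap ℝ _ x)⁻¹)).trace.re ≤
      ((ε + x) ^ 2)⁻¹ * (Cᴴ * C).trace.re := by
  have h := re_trace_conjTranspose_mul_mul_mul_mono (inv_add_algebraMap_nonneg hε hA hx)
    (inv_add_algebraMap_le hε hA hx) (inv_add_algebraMap_nonneg hε hB hx)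
    (inv_add_algebraMap_le hε hB hx) C
  rwa [re_trace_conjTranspose_mul_algebraMap_mul_mul_algebraMap, ← mul_inv, ← sq] at h

theorem mul_re_trace_le_cfc_rpow_sandwich {B : Matrix n n ℂ} (hε : 0 < ε)
    (hA : algebraMap ℝ _ ε ≤ A) (hB : algebraMap ℝ _ ε ≤ B) {s : ℝ} (hs : s ∈ Icc (0 : ℝ) 1)
    (C : Matrix n n ℂ) :
    ε * (Cᴴ * C).trace.re ≤
      (Cᴴ * (cfc (fun t : ℝ => t ^ (1 - s)) A * C * cfc (fun t : ℝ => t ^ s) B)).trace.re := by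
  have hpow (p : ℝ) : 0 ≤ algebraMap ℝ (Matrix n n ℂ) (ε ^ p) :=
    algebraMap_nonneg _ (Real.rpow_nonneg hε.le p)
  have h := re_trace_conjTranspose_mul_mul_mul_mono
    (hpow _) (algebraMap_rpow_le_cfc_rpow hε.le hA (sub_nonneg.mpr hs.2))
    (hpow _) (algebraMap_rpow_le_cfc_rpow hε.le hB hs.1) C
  rwa [re_trace_conjTranspose_mul_algebraMap_mul_mul_algebraMap, ← Real.rpow_add hε,
    sub_add_cancel, Real.rpow_one] at h

end Matrix

section

variable {A B : Matrix (Fin m) (Fin m) ℂ} {ε : ℝ}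

theorem mul_re_trace_le_re_trace_matSharp (hε : 0 < ε) (hA : algebraMap ℝ _ ε ≤ A)
    (hB : algebraMap ℝ _ ε ≤ B) (C : Matrix (Fin m) (Fin m) ℂ) :
    ε * (Cᴴ * C).trace.re ≤ (Cᴴ * matSharp A B C).trace.re := by
  have h := (reTraceConjTransposeMul C).le_apply_intervalIntegral
    (((continuous_cfc_rpow hε hA (by fun_prop)).mul continuous_const).mul
      (continuous_cfc_rpow hε hB continuous_id)) zero_le_one
    fun s hs => mul_re_trace_le_cfc_rpow_sandwich hε hA hB hs C
  rwa [sub_zero, one_mul] at h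

theorem mul_re_trace_matSharpHat_le (hε : 0 < ε) (hA : algebraMap ℝ _ ε ≤ A)
    (hB : algebraMap ℝ _ ε ≤ B) (C : Matrix (Fin m) (Fin m) ℂ) :
    ε * (Cᴴ * matSharpHat A B C).trace.re ≤ (Cᴴ * C).trace.re := by
  have hK : 0 ≤ (Cᴴ * C).trace.re :=
    (Complex.nonneg_iff.mp (posSemidef_conjTranspose_mul_self C).trace_nonneg).1
  have hbound : (Cᴴ * matSharpHat A B C).trace.re ≤
      ∫ x in Ioi 0, ((ε + x) ^ 2)⁻¹ * (Cᴴ * C).trace.re := by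
    rw [← reTraceConjTransposeMul_apply, matSharpHat]
    refine (reTraceConjTransposeMul C).apply_setIntegral_le measurableSet_Ioi
      ((integrableOn_Ioi_inv_add_sq hε).mul_const _) (fun x hx => ?_)
      (by rw [integral_mul_const, integral_Ioi_inv_add_sq hε]; exact mul_nonneg (by positivity) hK)
    rw [reTraceConjTransposeMul_apply, ofReal_smul_one_eq_algebraMap]
    exact re_trace_resolvent_sandwich_le hε hA hB hx.out.le C
  rw [integral_mul_const, integral_Ioi_inv_add_sq hε] at hbound
  calc ε * (Cᴴ * matSharpHat A B C).trace.re ≤ ε * (ε⁻¹ * (Cᴴ * C).trace.re) := by gcongr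
    _ = (Cᴴ * C).trace.re := by field_simp

end

theorem trace_sharp_eps_bounds_general (A B : Matrix (Fin m) (Fin m) ℂ)
    (ε : ℝ) (hε : 0 < ε)
    (hAε : (A - (ε : ℂ) • 1).PosSemidef) (hBε : (B - (ε : ℂ) • 1).PosSemidef)
    (C : Matrix (Fin m) (Fin m) ℂ) :
    ε * (Cᴴ * matSharpHat A B C).trace.re ≤ (Cᴴ * C).trace.re ∧
      (Cᴴ * C).trace.re ≤ (1 / ε) * (Cᴴ * matSharp A B C).trace.re := by
  have hA : algebraMap ℝ _ ε ≤ A := by rwa [Matrix.le_iff, ← ofReal_smul_one_eq_algebraMap]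
  have hB : algebraMap ℝ _ ε ≤ B := by rwa [Matrix.le_iff, ← ofReal_smul_one_eq_algebraMap]
  refine ⟨mul_re_trace_matSharpHat_le hε hA hB C, ?_⟩
  rw [one_div, ← div_eq_inv_mul, le_div_iff₀' hε]
  exact mul_re_trace_le_re_trace_matSharp hε hA hB C

/-- If `A, B` are Hermitian with `A ≥ εI`, `B ≥ εI` for some `ε > 0`, then for every `C`:
`ε·tr[C* ((A,B)♯̂ C)] ≤ tr[C*C] ≤ (1/ε)·tr[C* ((A,B)# C)]`. -/
theorem trace_sharp_eps_bounds (A B : Matrix (Fin m) (Fin m) ℂ)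
    (hA : A.IsHermitian) (hB : B.IsHermitian) (ε : ℝ) (hε : 0 < ε)
    (hAε : (A - (ε : ℂ) • 1).PosSemidef) (hBε : (B - (ε : ℂ) • 1).PosSemidef)
    (C : Matrix (Fin m) (Fin m) ℂ) :
    ε * (Cᴴ * matSharpHat A B C).trace.re ≤ (Cᴴ * C).trace.re ∧
      (Cᴴ * C).trace.re ≤ (1 / ε) * (Cᴴ * matSharp A B C).trace.re :=
  trace_sharp_eps_bounds_general A B ε hε hAε hBε C
end

section
/- The antilinear map Γ*(C) := Γ(C*) on the Clifford algebra commutes with the operator [Γ(ρ),ρ]# for every strictly positive density ρ: Γ*([Γ(ρ),ρ]#C) = [Γ(ρ),ρ]#Γ*(C) for all C, where [Γ(ρ),ρ]#C = ∫₀¹ Γ(ρ)^{1-s} C ρ^s ds. -/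
open MeasureTheory Matrix
open scoped ComplexOrder

attribute [local instance] Matrix.frobeniusNormedAddCommGroup Matrix.frobeniusNormedSpace

/-!
`Γ*` is a real-linear homeomorphism, so it passes under the integral. On the integrand,
`Γ*(Γ(ρ)^{1-s} C ρ^s) = Γ(ρ^s) Γ(C*) Γ(Γ(ρ))^{1-s} = Γ(ρ)^s Γ*(C) ρ^{1-s}`, since `Γ` commutes with
the functional calculus and is an involution; the substitution `s ↦ 1 - s` then gives `[Γ(ρ),ρ]#Γ*(C)`.
-/

theorem ContinuousLinearEquiv.intervalIntegral_comp_comm {𝕜 E F : Type*} [RCLike 𝕜]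
    [NormedAddCommGroup E] [NormedSpace 𝕜 E] [NormedSpace ℝ E]
    [NormedAddCommGroup F] [NormedSpace 𝕜 F] [NormedSpace ℝ F]
    (L : E ≃L[𝕜] F) (f : ℝ → E) {a b : ℝ} {μ : Measure ℝ} :
    ∫ x in a..b, L (f x) ∂μ = L (∫ x in a..b, f x ∂μ) := by
  simp only [intervalIntegral, L.integral_comp_comm, map_sub]

variable {n : Type*} [Fintype n] [DecidableEq n]

noncomputable def gammaStar (Γ : Matrix n n ℂ ≃⋆ₐ[ℂ] Matrix n n ℂ) :
    Matrix n n ℂ ≃L[ℝ] Matrix n n ℂ :=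
  (starL' ℝ).trans ((Γ.toAlgEquiv.toLinearEquiv.toContinuousLinearEquiv).restrictScalars ℝ)

theorem gammaStar_apply (Γ : Matrix n n ℂ ≃⋆ₐ[ℂ] Matrix n n ℂ) (C : Matrix n n ℂ) :
    gammaStar Γ C = Γ Cᴴ := rfl

theorem StarAlgEquiv.map_cfc_rpow (Γ : Matrix n n ℂ ≃⋆ₐ[ℂ] Matrix n n ℂ) {A : Matrix n n ℂ}
    (hA : A.IsHermitian) {s : ℝ} (hs : 0 ≤ s) :
    Γ (cfc (fun t : ℝ => t ^ s) A) = cfc (fun t : ℝ => t ^ s) (Γ A) :=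
  StarAlgHomClass.map_cfc Γ _ A (Real.continuous_rpow_const hs).continuousOn
    (LinearMap.continuous_of_finiteDimensional Γ.toAlgEquiv.toLinearMap :)
    hA (IsSelfAdjoint.map hA Γ)

theorem gammaStar_rpow_mul_mul_rpow (Γ : Matrix n n ℂ ≃⋆ₐ[ℂ] Matrix n n ℂ)
    (hΓΓ : ∀ A, Γ (Γ A) = A) {ρ : Matrix n n ℂ} (hρ : ρ.IsHermitian) {s t : ℝ}
    (hs : 0 ≤ s) (ht : 0 ≤ t) (C : Matrix n n ℂ) :
    gammaStar Γ (cfc (fun x : ℝ => x ^ t) (Γ ρ) * C * cfc (fun x : ℝ => x ^ s) ρ) =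
      cfc (fun x : ℝ => x ^ s) (Γ ρ) * gammaStar Γ C * cfc (fun x : ℝ => x ^ t) ρ := by
  have hρt : (cfc (fun x : ℝ => x ^ t) (Γ ρ))ᴴ = cfc (fun x : ℝ => x ^ t) (Γ ρ) :=
    IsSelfAdjoint.cfc
  have hρs : (cfc (fun x : ℝ => x ^ s) ρ)ᴴ = cfc (fun x : ℝ => x ^ s) ρ := IsSelfAdjoint.cfc
  rw [gammaStar_apply, gammaStar_apply, conjTranspose_mul, conjTranspose_mul, hρt, hρs,
    ← mul_assoc, map_mul, map_mul, Γ.map_cfc_rpow hρ hs, Γ.map_cfc_rpow (IsSelfAdjoint.map hρ Γ) ht, hΓΓ]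

/-- The antilinear map `Γ*(C) = Γ(C*)` commutes with `[Γ(ρ),ρ]#` for every strictly
positive density `ρ`, where `[Γ(ρ),ρ]#C = ∫₀¹ Γ(ρ)^{1-s} C ρ^s ds` and `Γ` is a
`*`-automorphism (the grading automorphism of the Clifford algebra). -/
theorem gammaStar_commutes_with_sharp {m : ℕ}
    (Γ : Matrix (Fin m) (Fin m) ℂ ≃⋆ₐ[ℂ] Matrix (Fin m) (Fin m) ℂ)
    (hΓΓ : ∀ A, Γ (Γ A) = A)
    (ρ : Matrix (Fin m) (Fin m) ℂ) (hρ : ρ.PosDef)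
    (sharp : Matrix (Fin m) (Fin m) ℂ → Matrix (Fin m) (Fin m) ℂ)
    (hsharp : ∀ C, sharp C = ∫ s in (0:ℝ)..1,
      cfc (fun t : ℝ => t ^ (1 - s)) (Γ ρ) * C * cfc (fun t : ℝ => t ^ s) ρ) :
    ∀ C, Γ ((sharp C)ᴴ) = sharp (Γ Cᴴ) := by
  intro C
  calc Γ ((sharp C)ᴴ)
      = ∫ s in (0:ℝ)..1, gammaStar Γ
          (cfc (fun t : ℝ => t ^ (1 - s)) (Γ ρ) * C * cfc (fun t : ℝ => t ^ s) ρ) := by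
        rw [hsharp, ← gammaStar_apply]
        exact ((gammaStar Γ).intervalIntegral_comp_comm _).symm
    _ = ∫ s in (0:ℝ)..1,
          cfc (fun t : ℝ => t ^ s) (Γ ρ) * Γ Cᴴ * cfc (fun t : ℝ => t ^ (1 - s)) ρ := by
        refine intervalIntegral.integral_congr fun s hs => ?_
        rw [Set.uIcc_of_le zero_le_one] at hs
        exact gammaStar_rpow_mul_mul_rpow Γ hΓΓ hρ.isHermitian hs.1 (sub_nonneg.2 hs.2) C
    _ = sharp (Γ Cᴴ) := by
        simpa [hsharp] using (intervalIntegral.integral_comp_sub_left (a := 0) (b := 1)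
          (fun s : ℝ => cfc (fun t : ℝ => t ^ (1 - s)) (Γ ρ) * Γ Cᴴ * cfc (fun t : ℝ => t ^ s) ρ) 1)
end

section
/- In the Clifford algebra, for any strictly positive density ρ and any C ∈ Cl, div([Γ(ρ),ρ]# ∇(C*)) = (div([Γ(ρ),ρ]# ∇C))*. In particular, if C is self-adjoint then div([Γ(ρ),ρ]# ∇C) is self-adjoint. -/
open MeasureTheory Matrix
open scoped ComplexOrder

attribute [local instance] Matrix.frobeniusNormedAddCommGroup Matrix.frobeniusNormedSpace

theorem intervalIntegral_star {E : Type*} [NormedAddCommGroup E] [NormedSpace ℝ E]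
    [StarAddMonoid E] [StarModule ℝ E] [ContinuousStar E] (f : ℝ → E) {a b : ℝ} {μ : Measure ℝ} :
    ∫ x in a..b, star (f x) ∂μ = star (∫ x in a..b, f x ∂μ) :=
  (starL' ℝ).intervalIntegral_comp_comm f

section Sharp

variable {ι κ : Type*} [Fintype ι] [DecidableEq ι] [Fintype κ] [DecidableEq κ]

/-- The paper's `[A, B]#`. -/
noncomputable def sharpOp (A B C : Matrix ι ι ℂ) : Matrix ι ι ℂ :=
  ∫ s in (0 : ℝ)..1, cfc (fun t : ℝ => t ^ (1 - s)) A * C * cfc (fun t : ℝ => t ^ s) B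

theorem star_sharpOp (A B C : Matrix ι ι ℂ) : star (sharpOp A B C) = sharpOp B A (star C) := by
  have hpt : ∀ s : ℝ,
      star (cfc (fun t : ℝ => t ^ (1 - s)) A * C * cfc (fun t : ℝ => t ^ s) B) =
        cfc (fun t : ℝ => t ^ (1 - (1 - s))) B * star C * cfc (fun t : ℝ => t ^ (1 - s)) A := by
    intro s
    simp only [star_mul, sub_sub_cancel, (cfc_predicate _ _ : IsSelfAdjoint (cfc _ A)).star_eq,
      (cfc_predicate _ _ : IsSelfAdjoint (cfc _ B)).star_eq, mul_assoc]
  rw [sharpOp, ← intervalIntegral_star]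
  simp only [hpt]
  rw [intervalIntegral.integral_comp_sub_left
    (fun s => cfc (fun t : ℝ => t ^ (1 - s)) B * star C * cfc (fun t : ℝ => t ^ s) A) 1]
  simp only [sub_self, sub_zero, sharpOp]

theorem StarAlgEquiv.map_sharpOp (Γ : Matrix ι ι ℂ ≃⋆ₐ[ℂ] Matrix κ κ ℂ) {A B : Matrix ι ι ℂ}
    (hA : IsSelfAdjoint A) (hB : IsSelfAdjoint B) (C : Matrix ι ι ℂ) :
    Γ (sharpOp A B C) = sharpOp (Γ A) (Γ B) (Γ C) := by
  let L := Γ.toAlgEquiv.toLinearEquiv.toContinuousLinearEquiv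
  have hcfc : ∀ (f : ℝ → ℝ) {X : Matrix ι ι ℂ}, IsSelfAdjoint X → Γ (cfc f X) = cfc f (Γ X) :=
    fun f X hX => StarAlgHomClass.map_cfc Γ f X (finite_real_spectrum.continuousOn f) L.continuous
      hX (hX.map Γ)
  refine (L.intervalIntegral_comp_comm _).symm.trans (intervalIntegral.integral_congr fun s _ => ?_)
  change Γ _ = _
  rw [map_mul, map_mul, hcfc _ hA, hcfc _ hB]

theorem star_sharpOp_eq_map_sharpOp {Γ : Matrix ι ι ℂ ≃⋆ₐ[ℂ] Matrix ι ι ℂ}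
    (hΓ : Function.Involutive Γ) {ρ : Matrix ι ι ℂ} (hρ : IsSelfAdjoint ρ) (X : Matrix ι ι ℂ) :
    star (sharpOp (Γ ρ) ρ X) = Γ (sharpOp (Γ ρ) ρ (Γ (star X))) := by
  rw [Γ.map_sharpOp (hρ.map Γ) hρ, hΓ ρ, hΓ (star X), star_sharpOp]

end Sharp

section CliffordDerivative

variable {A : Type*} [Ring A] [StarRing A] [Algebra ℂ A] [StarModule ℂ A]

/-- For `Q = Qᵢ`, the paper's `∇ᵢ`. -/
noncomputable def cliffordDeriv (Γ : A ≃⋆ₐ[ℂ] A) (Q a : A) : A := (2 : ℂ)⁻¹ • (Q * a - Γ a * Q)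

/-- For `Q = Qᵢ`, the paper's `∇ᵢ*`. -/
noncomputable def cliffordDerivAdjoint (Γ : A ≃⋆ₐ[ℂ] A) (Q a : A) : A := (2 : ℂ)⁻¹ • (Q * a + Γ a * Q)

variable {Γ : A ≃⋆ₐ[ℂ] A} {Q : A}

theorem star_cliffordDeriv (hΓ : Function.Involutive Γ) (hQ : IsSelfAdjoint Q) (hΓQ : Γ Q = -Q)
    (a : A) : star (cliffordDeriv Γ Q a) = Γ (cliffordDeriv Γ Q (star a)) := by
  simp only [cliffordDeriv, star_smul, star_sub, star_mul, hQ.star_eq, map_smul, map_sub, map_mul,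
    hΓQ, map_star, hΓ a, star_inv₀, star_ofNat, neg_mul, mul_neg, sub_neg_eq_add]
  abel_nf

theorem star_cliffordDerivAdjoint_of_star_eq (hΓ : Function.Involutive Γ) (hQ : IsSelfAdjoint Q)
    {x y : A} (h : star x = Γ y) :
    star (cliffordDerivAdjoint Γ Q x) = cliffordDerivAdjoint Γ Q y := by
  simp only [cliffordDerivAdjoint, star_smul, star_add, star_mul, hQ.star_eq, ← map_star, h, hΓ y,
    star_inv₀, star_ofNat, add_comm]

end CliffordDerivative

theorem div_sharp_grad_star_general {n m : ℕ}
    (Q : Fin n → Matrix (Fin m) (Fin m) ℂ)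
    (hsa : ∀ i, (Q i).IsHermitian)
    (Γ : Matrix (Fin m) (Fin m) ℂ ≃⋆ₐ[ℂ] Matrix (Fin m) (Fin m) ℂ)
    (hΓQ : ∀ i, Γ (Q i) = - Q i) (hΓΓ : ∀ A, Γ (Γ A) = A)
    (del delStar : Fin n → Matrix (Fin m) (Fin m) ℂ → Matrix (Fin m) (Fin m) ℂ)
    (hdel : ∀ i A, del i A = (2 : ℂ)⁻¹ • (Q i * A - Γ A * Q i))
    (hdelStar : ∀ i A, delStar i A = (2 : ℂ)⁻¹ • (Q i * A + Γ A * Q i))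
    (dvg : (Fin n → Matrix (Fin m) (Fin m) ℂ) → Matrix (Fin m) (Fin m) ℂ)
    (hdvg : ∀ V, dvg V = - ∑ i : Fin n, delStar i (V i))
    (ρ : Matrix (Fin m) (Fin m) ℂ) (hρ : ρ.PosDef)
    (sharp : Matrix (Fin m) (Fin m) ℂ → Matrix (Fin m) (Fin m) ℂ)
    (hsharp : ∀ C, sharp C = ∫ s in (0:ℝ)..1,
      cfc (fun t : ℝ => t ^ (1 - s)) (Γ ρ) * C * cfc (fun t : ℝ => t ^ s) ρ) :
    ∀ C : Matrix (Fin m) (Fin m) ℂ,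
      dvg (fun i => sharp (del i Cᴴ)) = (dvg (fun i => sharp (del i C)))ᴴ ∧
      (C.IsHermitian → (dvg (fun i => sharp (del i C))).IsHermitian) := by
  have hsharpOp : sharp = sharpOp (Γ ρ) ρ := funext hsharp
  have hcliffordDeriv : ∀ i, del i = cliffordDeriv Γ (Q i) := fun i => funext (hdel i)
  have hcliffordDerivAdjoint : ∀ i, delStar i = cliffordDerivAdjoint Γ (Q i) :=
    fun i => funext (hdelStar i)
  have hsummand : ∀ C i, delStar i (sharp (del i (star C))) = star (delStar i (sharp (del i C))) := by
    intro C i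
    rw [hsharpOp, hcliffordDeriv, hcliffordDerivAdjoint]
    refine (star_cliffordDerivAdjoint_of_star_eq hΓΓ (hsa i) ?_).symm
    rw [star_sharpOp_eq_map_sharpOp hΓΓ hρ.isHermitian, star_cliffordDeriv hΓΓ (hsa i) (hΓQ i),
      hΓΓ]
  intro C
  have hdiv : dvg (fun i => sharp (del i Cᴴ)) = (dvg fun i => sharp (del i C))ᴴ := by
    simp only [hdvg, ← star_eq_conjTranspose, star_neg, star_sum, hsummand]
  exact ⟨hdiv, fun hC => by rw [IsHermitian, ← hdiv, hC.eq]⟩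

/-- In the Clifford algebra (realized as matrices), for any strictly positive density `ρ`
and any `C`, `div([Γ(ρ),ρ]# ∇(C*)) = (div([Γ(ρ),ρ]# ∇C))*`; in particular if `C` is
self-adjoint then `div([Γ(ρ),ρ]# ∇C)` is self-adjoint. -/
theorem div_sharp_grad_star {n m : ℕ}
    (Q : Fin n → Matrix (Fin m) (Fin m) ℂ)
    (hCAR : ∀ i j, Q i * Q j + Q j * Q i = if i = j then (2 : Matrix (Fin m) (Fin m) ℂ) else 0)
    (hsa : ∀ i, (Q i).IsHermitian)
    (Γ : Matrix (Fin m) (Fin m) ℂ ≃⋆ₐ[ℂ] Matrix (Fin m) (Fin m) ℂ)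
    (hΓQ : ∀ i, Γ (Q i) = - Q i) (hΓΓ : ∀ A, Γ (Γ A) = A)
    (del delStar : Fin n → Matrix (Fin m) (Fin m) ℂ → Matrix (Fin m) (Fin m) ℂ)
    (hdel : ∀ i A, del i A = (2 : ℂ)⁻¹ • (Q i * A - Γ A * Q i))
    (hdelStar : ∀ i A, delStar i A = (2 : ℂ)⁻¹ • (Q i * A + Γ A * Q i))
    (dvg : (Fin n → Matrix (Fin m) (Fin m) ℂ) → Matrix (Fin m) (Fin m) ℂ)
    (hdvg : ∀ V, dvg V = - ∑ i : Fin n, delStar i (V i))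
    (ρ : Matrix (Fin m) (Fin m) ℂ) (hρ : ρ.PosDef)
    (sharp : Matrix (Fin m) (Fin m) ℂ → Matrix (Fin m) (Fin m) ℂ)
    (hsharp : ∀ C, sharp C = ∫ s in (0:ℝ)..1,
      cfc (fun t : ℝ => t ^ (1 - s)) (Γ ρ) * C * cfc (fun t : ℝ => t ^ s) ρ) :
    ∀ C : Matrix (Fin m) (Fin m) ℂ,
      dvg (fun i => sharp (del i Cᴴ)) = (dvg (fun i => sharp (del i C)))ᴴ ∧
      (C.IsHermitian → (dvg (fun i => sharp (del i C))).IsHermitian) :=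
  div_sharp_grad_star_general Q hsa Γ hΓQ hΓΓ del delStar hdel hdelStar dvg hdvg ρ hρ sharp hsharp
end

section
/- Every vector field V ∈ Clⁿ has a unique decomposition V = ∇U + Z, where U ∈ Cl, and Z ∈ Clⁿ is divergence-free (div Z = 0). Consequently, if τ(W*·V) = 0 for every divergence-free W ∈ Clⁿ, then V = ∇U for some U ∈ Cl. -/
/-!
For the Hilbert–Schmidt pairing `⟨A, B⟩ = tr (Aᴴ B)`, the map `-div` is the adjoint of `∇`.
This holds because `Γ` is a trace-preserving *-automorphism flipping the Hermitian
generators. So `N = -div ∘ ∇` is positive, and `ker N = ker ∇ ⊆ ℂ·1`. Every divergence is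
traceless, being orthogonal to `∇1 = 0`, so a dimension count gives `range N = ker tr`.
Hence `div V = div ∇U` for some `U`, and `Z = V - ∇U` is divergence-free. The
decomposition is unique because a divergence-free gradient `∇A` satisfies
`‖∇A‖² = -⟨A, div ∇A⟩ = 0`. Finally, a divergence-free `Z` is orthogonal to every
gradient; so if `V = ∇U + Z` is orthogonal to `Z`, then `‖Z‖² = 0`.
-/

open Matrix
open scoped ComplexOrder

theorem Matrix.trace_sum_conjTranspose_mul_self_eq_zero_iff {ι m n R : Type*} [Fintype ι]
    [Fintype m] [Fintype n] [CommRing R] [PartialOrder R] [StarRing R] [StarOrderedRing R]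
    [NoZeroDivisors R] {F : ι → Matrix m n R} : (∑ i, (F i)ᴴ * F i).trace = 0 ↔ F = 0 := by
  rw [trace_sum, Finset.sum_eq_zero_iff_of_nonneg fun i _ =>
    (posSemidef_conjTranspose_mul_self (F i)).trace_nonneg]
  simp [trace_conjTranspose_mul_self_eq_zero_iff, funext_iff]

noncomputable section

namespace Clifford

variable {ι m : Type*} [Fintype m] [DecidableEq m]
  (Q : ι → Matrix m m ℂ) (Γ : Matrix m m ℂ ≃⋆ₐ[ℂ] Matrix m m ℂ)

structure IsHermitianGrading : Prop where
  isHermitian : ∀ i, (Q i).IsHermitian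
  map_generator : ∀ i, Γ (Q i) = -Q i
  involutive : ∀ A, Γ (Γ A) = A

def partialDeriv (i : ι) : Matrix m m ℂ →ₗ[ℂ] Matrix m m ℂ :=
  (2 : ℂ)⁻¹ •
    (LinearMap.mulLeft ℂ (Q i) - LinearMap.mulRight ℂ (Q i) ∘ₗ Γ.toAlgEquiv.toLinearMap)

def partialDerivAdjoint (i : ι) : Matrix m m ℂ →ₗ[ℂ] Matrix m m ℂ :=
  (2 : ℂ)⁻¹ •
    (LinearMap.mulLeft ℂ (Q i) + LinearMap.mulRight ℂ (Q i) ∘ₗ Γ.toAlgEquiv.toLinearMap)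

def grad : Matrix m m ℂ →ₗ[ℂ] ι → Matrix m m ℂ :=
  LinearMap.pi (partialDeriv Q Γ)

variable [Fintype ι] in
def divergence : (ι → Matrix m m ℂ) →ₗ[ℂ] Matrix m m ℂ :=
  -∑ i, partialDerivAdjoint Q Γ i ∘ₗ LinearMap.proj i

variable {Q Γ}

lemma partialDeriv_apply (i : ι) (A : Matrix m m ℂ) :
    partialDeriv Q Γ i A = (2 : ℂ)⁻¹ • (Q i * A - Γ A * Q i) := rfl

lemma partialDerivAdjoint_apply (i : ι) (A : Matrix m m ℂ) :
    partialDerivAdjoint Q Γ i A = (2 : ℂ)⁻¹ • (Q i * A + Γ A * Q i) := rfl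

lemma grad_apply (A : Matrix m m ℂ) (i : ι) : grad Q Γ A i = partialDeriv Q Γ i A := rfl

variable [Fintype ι] in
lemma divergence_apply (V : ι → Matrix m m ℂ) :
    divergence Q Γ V = -∑ i, partialDerivAdjoint Q Γ i (V i) := by
  simp [divergence]

@[simp] lemma grad_one : grad Q Γ (1 : Matrix m m ℂ) = 0 := by
  ext1 i
  simp [grad_apply, partialDeriv_apply]

lemma trace_conjTranspose_partialDeriv_mul (hQΓ : IsHermitianGrading Q Γ) (i : ι)
    (A B : Matrix m m ℂ) :
    ((partialDeriv Q Γ i A)ᴴ * B).trace = (Aᴴ * partialDerivAdjoint Q Γ i B).trace := by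
  have hΓstar : Γ Aᴴ = (Γ A)ᴴ := map_star Γ A
  have key : (Q i * (Γ Aᴴ * B)).trace = -(Aᴴ * (Γ B * Q i)).trace := calc
    (Q i * (Γ Aᴴ * B)).trace = (Γ Aᴴ * B * Q i).trace := trace_mul_comm _ _
    _ = (Γ (Aᴴ * Γ B * -Q i)).trace := by simp [hQΓ.involutive, hQΓ.map_generator]
    _ = -(Aᴴ * (Γ B * Q i)).trace := by rw [trace_map, mul_neg, trace_neg, mul_assoc]
  rw [partialDeriv_apply, partialDerivAdjoint_apply, conjTranspose_smul, conjTranspose_sub,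
    conjTranspose_mul, conjTranspose_mul, (hQΓ.isHermitian i).eq, ← hΓstar]
  simp only [star_inv₀, star_ofNat, smul_mul_assoc, mul_smul_comm, trace_smul, sub_mul, mul_add,
    trace_sub, trace_add, key, mul_assoc]
  ring

variable [Fintype ι]

lemma trace_sum_conjTranspose_grad_mul (hQΓ : IsHermitianGrading Q Γ) (A : Matrix m m ℂ)
    (V : ι → Matrix m m ℂ) :
    (∑ i, (grad Q Γ A i)ᴴ * V i).trace = -(Aᴴ * divergence Q Γ V).trace := by
  simp [grad_apply, divergence_apply, trace_sum, Matrix.mul_sum,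
    trace_conjTranspose_partialDeriv_mul hQΓ]

lemma trace_divergence (hQΓ : IsHermitianGrading Q Γ) (V : ι → Matrix m m ℂ) :
    (divergence Q Γ V).trace = 0 := by
  have h := trace_sum_conjTranspose_grad_mul hQΓ 1 V
  rw [grad_one] at h
  simpa using h.symm

lemma trace_sum_conjTranspose_mul_grad (hQΓ : IsHermitianGrading Q Γ) {Z : ι → Matrix m m ℂ}
    (hZ : divergence Q Γ Z = 0) (U : Matrix m m ℂ) :
    (∑ i, (Z i)ᴴ * grad Q Γ U i).trace = 0 := by
  have : ∑ i, (Z i)ᴴ * grad Q Γ U i = (∑ i, (grad Q Γ U i)ᴴ * Z i)ᴴ := by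
    simp [conjTranspose_sum]
  rw [this, trace_conjTranspose, trace_sum_conjTranspose_grad_mul hQΓ, hZ]
  simp

lemma grad_eq_zero_of_divergence_grad_eq_zero (hQΓ : IsHermitianGrading Q Γ)
    {A : Matrix m m ℂ} (h : divergence Q Γ (grad Q Γ A) = 0) : grad Q Γ A = 0 := by
  rw [← trace_sum_conjTranspose_mul_self_eq_zero_iff, trace_sum_conjTranspose_grad_mul hQΓ, h,
    Matrix.mul_zero, trace_zero, neg_zero]

lemma range_divergence_comp_grad [Nonempty m] (hQΓ : IsHermitianGrading Q Γ)
    (hker : LinearMap.ker (grad Q Γ) ≤ ℂ ∙ (1 : Matrix m m ℂ)) :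
    LinearMap.range (divergence Q Γ ∘ₗ grad Q Γ) = LinearMap.ker (traceLinearMap m ℂ ℂ) := by
  have hle : LinearMap.range (divergence Q Γ ∘ₗ grad Q Γ) ≤
      LinearMap.ker (traceLinearMap m ℂ ℂ) := by
    rintro _ ⟨A, rfl⟩
    exact trace_divergence hQΓ _
  refine Submodule.eq_of_le_of_finrank_le hle ?_
  have hker_le : LinearMap.ker (divergence Q Γ ∘ₗ grad Q Γ) ≤ ℂ ∙ (1 : Matrix m m ℂ) :=
    fun A hA => hker (grad_eq_zero_of_divergence_grad_eq_zero hQΓ hA)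
  have hdim_ker :=
    (Submodule.finrank_mono hker_le).trans_eq (finrank_span_singleton one_ne_zero)
  have hdim_trace : Module.finrank ℂ (LinearMap.range (traceLinearMap m ℂ ℂ)) = 1 := by
    rw [LinearMap.range_eq_top.mpr (trace_surjective (R := ℂ)), finrank_top, Module.finrank_self]
  have := LinearMap.finrank_range_add_finrank_ker (divergence Q Γ ∘ₗ grad Q Γ)
  have := LinearMap.finrank_range_add_finrank_ker (traceLinearMap m ℂ ℂ)
  omega

theorem exists_eq_grad_add_and_divergence_eq_zero [Nonempty m]
    (hQΓ : IsHermitianGrading Q Γ)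
    (hker : LinearMap.ker (grad Q Γ) ≤ ℂ ∙ (1 : Matrix m m ℂ)) (V : ι → Matrix m m ℂ) :
    ∃ U Z, V = grad Q Γ U + Z ∧ divergence Q Γ Z = 0 := by
  have hV : divergence Q Γ V ∈ LinearMap.range (divergence Q Γ ∘ₗ grad Q Γ) := by
    rw [range_divergence_comp_grad hQΓ hker]
    exact trace_divergence hQΓ V
  obtain ⟨U, hU⟩ := hV
  refine ⟨U, V - grad Q Γ U, (add_sub_cancel _ _).symm, ?_⟩
  rw [map_sub, ← LinearMap.comp_apply, hU, sub_self]

theorem grad_eq_of_grad_add_eq_grad_add (hQΓ : IsHermitianGrading Q Γ) {U U' : Matrix m m ℂ}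
    {Z Z' : ι → Matrix m m ℂ} (h : grad Q Γ U + Z = grad Q Γ U' + Z')
    (hZ : divergence Q Γ Z = 0) (hZ' : divergence Q Γ Z' = 0) : grad Q Γ U = grad Q Γ U' := by
  have hgrad : grad Q Γ (U - U') = Z' - Z := by
    rw [map_sub, sub_eq_sub_iff_add_eq_add, h, add_comm]
  have hdiv : divergence Q Γ (grad Q Γ (U - U')) = 0 := by
    rw [hgrad, map_sub, hZ, hZ', sub_zero]
  rw [← sub_eq_zero, ← map_sub]
  exact grad_eq_zero_of_divergence_grad_eq_zero hQΓ hdiv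

theorem exists_eq_grad_of_orthogonal_divergenceFree [Nonempty m]
    (hQΓ : IsHermitianGrading Q Γ)
    (hker : LinearMap.ker (grad Q Γ) ≤ ℂ ∙ (1 : Matrix m m ℂ)) {V : ι → Matrix m m ℂ}
    (hV : ∀ W, divergence Q Γ W = 0 → (∑ i, (W i)ᴴ * V i).trace = 0) :
    ∃ U, V = grad Q Γ U := by
  obtain ⟨U, Z, rfl, hZ⟩ := exists_eq_grad_add_and_divergence_eq_zero hQΓ hker V
  have hZZ : (∑ i, (Z i)ᴴ * Z i).trace = 0 := by
    simpa [mul_add, Finset.sum_add_distrib, trace_add,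
      trace_sum_conjTranspose_mul_grad hQΓ hZ] using hV Z hZ
  rw [trace_sum_conjTranspose_mul_self_eq_zero_iff] at hZZ
  exact ⟨U, by rw [hZZ, add_zero]⟩

end Clifford

end

open Clifford

theorem clifford_helmholtz_decomposition_general {n m : ℕ} (hm : 0 < m)
    (Q : Fin n → Matrix (Fin m) (Fin m) ℂ)
    (hsa : ∀ i, (Q i).IsHermitian)
    (τ : Matrix (Fin m) (Fin m) ℂ → ℂ) (hτ : ∀ A, τ A = A.trace / m)
    (Γ : Matrix (Fin m) (Fin m) ℂ ≃⋆ₐ[ℂ] Matrix (Fin m) (Fin m) ℂ)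
    (hΓQ : ∀ i, Γ (Q i) = - Q i) (hΓΓ : ∀ A, Γ (Γ A) = A)
    (del delStar : Fin n → Matrix (Fin m) (Fin m) ℂ → Matrix (Fin m) (Fin m) ℂ)
    (hdel : ∀ i A, del i A = (2 : ℂ)⁻¹ • (Q i * A - Γ A * Q i))
    (hdelStar : ∀ i A, delStar i A = (2 : ℂ)⁻¹ • (Q i * A + Γ A * Q i))
    (dvg : (Fin n → Matrix (Fin m) (Fin m) ℂ) → Matrix (Fin m) (Fin m) ℂ)
    (hdvg : ∀ V, dvg V = - ∑ i : Fin n, delStar i (V i))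
    (hker : ∀ A : Matrix (Fin m) (Fin m) ℂ, (∀ i, del i A = 0) → ∃ c : ℂ, A = c • 1) :
    ∀ V : Fin n → Matrix (Fin m) (Fin m) ℂ,
      (∃ (U : Matrix (Fin m) (Fin m) ℂ) (Z : Fin n → Matrix (Fin m) (Fin m) ℂ),
        (∀ i, V i = del i U + Z i) ∧ dvg Z = 0 ∧
        ∀ (U' : Matrix (Fin m) (Fin m) ℂ) (Z' : Fin n → Matrix (Fin m) (Fin m) ℂ),
          (∀ i, V i = del i U' + Z' i) → dvg Z' = 0 →
            (∀ i, del i U' = del i U) ∧ Z' = Z) ∧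
      ((∀ W : Fin n → Matrix (Fin m) (Fin m) ℂ,
          dvg W = 0 → τ (∑ i : Fin n, (W i)ᴴ * V i) = 0) →
        ∃ U : Matrix (Fin m) (Fin m) ℂ, ∀ i, V i = del i U) := by
  have hQΓ : IsHermitianGrading Q Γ := ⟨hsa, hΓQ, hΓΓ⟩
  have hdel' : ∀ i A, del i A = grad Q Γ A i := hdel
  have hdvg' : ∀ V, dvg V = divergence Q Γ V := fun V => by
    simp only [hdvg, hdelStar, divergence_apply, partialDerivAdjoint_apply]
  have hgradker : LinearMap.ker (grad Q Γ) ≤ ℂ ∙ (1 : Matrix (Fin m) (Fin m) ℂ) :=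
    fun A hA => by
      obtain ⟨c, rfl⟩ := hker A fun i => (hdel' i A).trans (congrFun hA i)
      exact Submodule.smul_mem _ c (Submodule.mem_span_singleton_self 1)
  have : Nonempty (Fin m) := ⟨⟨0, hm⟩⟩
  simp only [hdel', hdvg', hτ, div_eq_zero_iff, Nat.cast_eq_zero, hm.ne', or_false]
  intro V
  obtain ⟨U, Z, hV, hZ⟩ := exists_eq_grad_add_and_divergence_eq_zero hQΓ hgradker V
  refine ⟨⟨U, Z, congrFun hV, hZ, fun U' Z' hV' hZ' => ?_⟩, fun hW => ?_⟩
  · have hV' : V = grad Q Γ U' + Z' := funext hV'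
    have hU := grad_eq_of_grad_add_eq_grad_add hQΓ (hV'.symm.trans hV) hZ' hZ
    exact ⟨congrFun hU, add_left_cancel (hU ▸ hV'.symm.trans hV)⟩
  · obtain ⟨U, rfl⟩ := exists_eq_grad_of_orthogonal_divergenceFree hQΓ hgradker hW
    exact ⟨U, fun i => rfl⟩

/-- In the Clifford algebra (realized as matrices) with normalized trace `τ`, every vector
field `V ∈ Clⁿ` decomposes uniquely as `V = ∇U + Z` with `div Z = 0` (uniquely in the sense
that `∇U` and `Z` are unique); consequently, if `τ(W*·V) = 0` for every divergence-free
`W`, then `V` is a gradient. -/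
theorem clifford_helmholtz_decomposition {n m : ℕ} (hm : 0 < m)
    (Q : Fin n → Matrix (Fin m) (Fin m) ℂ)
    (hCAR : ∀ i j, Q i * Q j + Q j * Q i = if i = j then (2 : Matrix (Fin m) (Fin m) ℂ) else 0)
    (hsa : ∀ i, (Q i).IsHermitian)
    (τ : Matrix (Fin m) (Fin m) ℂ → ℂ) (hτ : ∀ A, τ A = A.trace / m)
    (Γ : Matrix (Fin m) (Fin m) ℂ ≃⋆ₐ[ℂ] Matrix (Fin m) (Fin m) ℂ)
    (hΓQ : ∀ i, Γ (Q i) = - Q i) (hΓΓ : ∀ A, Γ (Γ A) = A)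
    (del delStar : Fin n → Matrix (Fin m) (Fin m) ℂ → Matrix (Fin m) (Fin m) ℂ)
    (hdel : ∀ i A, del i A = (2 : ℂ)⁻¹ • (Q i * A - Γ A * Q i))
    (hdelStar : ∀ i A, delStar i A = (2 : ℂ)⁻¹ • (Q i * A + Γ A * Q i))
    (dvg : (Fin n → Matrix (Fin m) (Fin m) ℂ) → Matrix (Fin m) (Fin m) ℂ)
    (hdvg : ∀ V, dvg V = - ∑ i : Fin n, delStar i (V i))
    (hker : ∀ A : Matrix (Fin m) (Fin m) ℂ, (∀ i, del i A = 0) → ∃ c : ℂ, A = c • 1) :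
    ∀ V : Fin n → Matrix (Fin m) (Fin m) ℂ,
      (∃ (U : Matrix (Fin m) (Fin m) ℂ) (Z : Fin n → Matrix (Fin m) (Fin m) ℂ),
        (∀ i, V i = del i U + Z i) ∧ dvg Z = 0 ∧
        ∀ (U' : Matrix (Fin m) (Fin m) ℂ) (Z' : Fin n → Matrix (Fin m) (Fin m) ℂ),
          (∀ i, V i = del i U' + Z' i) → dvg Z' = 0 →
            (∀ i, del i U' = del i U) ∧ Z' = Z) ∧
      ((∀ W : Fin n → Matrix (Fin m) (Fin m) ℂ,
          dvg W = 0 → τ (∑ i : Fin n, (W i)ᴴ * V i) = 0) →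
        ∃ U : Matrix (Fin m) (Fin m) ℂ, ∀ i, V i = del i U) :=
  clifford_helmholtz_decomposition_general hm Q hsa τ hτ Γ hΓQ hΓΓ del delStar hdel hdelStar dvg
    hdvg hker
end

section
/- Let μ(x,y) = ∫₀¹ x^{1−α} y^α dα be the logarithmic mean. For −1 < r < 1, set θ = μ(1−r, 1+r) = r/arctanh(r) (with θ = 1 at r = 0). Then the geometric mean G = √(1−r²) satisfies G ≤ θ/√(2−θ), and also G ≤ θ ≤ 1. -/
/-! Write `r = tanh u`. Then `1 - r² = 1 / cosh² u` and `θ = tanh u / u`, so `θ ≤ 1` is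
`sinh u / u ≤ cosh u`, and `G² ≤ θ³` is Lazarević's inequality `cosh u ≤ (sinh u / u)³`; both
follow on `[0, ∞)` by comparing derivatives. The two bounds on `G` then come from `G² ≤ θ³`
and `θ ≤ 1`, the first one because `θ³ (2 - θ) ≤ θ²`. -/

noncomputable def logMean (x y : ℝ) : ℝ := ∫ α in (0:ℝ)..1, x ^ (1 - α) * y ^ α

open Real Set

theorem logMean_self {x : ℝ} (hx : 0 < x) : logMean x x = x := by
  simp [logMean, ← rpow_add hx]

theorem logMean_eq_div_log_sub {x y : ℝ} (hx : 0 < x) (hy : 0 < y) (hxy : x ≠ y) :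
    logMean x y = (y - x) / (log y - log x) := by
  have hc : log y - log x ≠ 0 := sub_ne_zero.2 fun h => hxy (log_injOn_pos hx hy h.symm)
  have hexp : ∀ α : ℝ, x ^ (1 - α) * y ^ α = exp (log x + (log y - log x) * α) := fun α => by
    rw [rpow_def_of_pos hx, rpow_def_of_pos hy, ← exp_add]; ring_nf
  have hderiv : ∀ α : ℝ, HasDerivAt (fun α => exp (log x + (log y - log x) * α) / (log y - log x))
      (exp (log x + (log y - log x) * α)) α := fun α => by
    refine ((((hasDerivAt_id' α).const_mul (log y - log x)).const_add (log x)).exp.div_const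
      (log y - log x)).congr_deriv ?_
    field_simp
  simp only [logMean, hexp]
  rw [intervalIntegral.integral_eq_sub_of_hasDerivAt (fun α _ => hderiv α)
    ((by fun_prop : Continuous fun α => exp (log x + (log y - log x) * α)).intervalIntegrable 0 1)]
  simp [exp_log hx, exp_log hy, sub_div]

theorem logMean_one_sub_one_add {r : ℝ} (h₁ : -1 < r) (h₂ : r < 1) (hr : r ≠ 0) :
    logMean (1 - r) (1 + r) = r / artanh r := by
  rw [logMean_eq_div_log_sub (by linarith) (by linarith) (by contrapose! hr; linarith),
    artanh_eq_half_log ⟨h₁.le, h₂.le⟩, log_div (by linarith) (by linarith), one_div_mul_eq_div,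
    div_div_eq_mul_div]
  ring

theorem le_of_eq_at_zero_of_hasDerivAt_le {f g f' g' : ℝ → ℝ} (hf : ∀ x, HasDerivAt f (f' x) x)
    (hg : ∀ x, HasDerivAt g (g' x) x) (h₀ : f 0 = g 0) (hd : ∀ x, 0 < x → f' x ≤ g' x)
    {x : ℝ} (hx : 0 ≤ x) : f x ≤ g x := by
  have hmono : MonotoneOn (fun x => g x - f x) (Ici 0) := by
    refine monotoneOn_of_hasDerivWithinAt_nonneg (convex_Ici 0)
      (fun y _ => ((hg y).sub (hf y)).continuousAt.continuousWithinAt)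
      (fun y _ => ((hg y).sub (hf y)).hasDerivWithinAt) fun y hy => ?_
    rw [interior_Ici] at hy
    exact sub_nonneg.2 (hd y hy)
  simpa [h₀] using hmono self_mem_Ici hx hx

theorem sinh_le_mul_cosh {x : ℝ} (hx : 0 ≤ x) : sinh x ≤ x * cosh x :=
  le_of_eq_at_zero_of_hasDerivAt_le hasDerivAt_sinh
    (fun y => (hasDerivAt_id y).mul (hasDerivAt_cosh y)) (by simp)
    (fun y hy => by simpa using mul_nonneg hy.le (sinh_nonneg_iff.2 hy.le)) hx

theorem one_add_sq_div_two_le_cosh {x : ℝ} (hx : 0 ≤ x) : 1 + x ^ 2 / 2 ≤ cosh x :=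
  le_of_eq_at_zero_of_hasDerivAt_le
    (fun y => (((hasDerivAt_pow 2 y).div_const 2).const_add 1).congr_deriv (by simp : _ = y))
    hasDerivAt_cosh (by simp) (fun y hy => self_le_sinh_iff.2 hy.le) hx

theorem self_add_pow_three_div_six_le_sinh {x : ℝ} (hx : 0 ≤ x) : x + x ^ 3 / 6 ≤ sinh x :=
  le_of_eq_at_zero_of_hasDerivAt_le
    (fun y => ((hasDerivAt_id y).add ((hasDerivAt_pow 3 y).div_const 6)).congr_deriv
      (by simp; ring : _ = 1 + y ^ 2 / 2))
    hasDerivAt_sinh (by simp) (fun y hy => one_add_sq_div_two_le_cosh hy.le) hx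

theorem pow_three_mul_cosh_le_sinh_pow_three {x : ℝ} (hx : 0 ≤ x) :
    x ^ 3 * cosh x ≤ sinh x ^ 3 := by
  refine le_of_eq_at_zero_of_hasDerivAt_le
    (fun y => (hasDerivAt_pow 3 y).mul (hasDerivAt_cosh y)) (fun y => (hasDerivAt_sinh y).pow 3)
    (by simp) (fun y hy => ?_) hx
  have hsinh : y ^ 2 + y ^ 4 / 3 ≤ sinh y ^ 2 := calc
    y ^ 2 + y ^ 4 / 3 ≤ (y + y ^ 3 / 6) ^ 2 := by nlinarith [pow_nonneg hy.le 6]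
    _ ≤ sinh y ^ 2 := pow_le_pow_left₀ (by positivity) (self_add_pow_three_div_six_le_sinh hy.le) 2
  norm_num
  -- 3 sinh² y cosh y ≥ (3y² + y⁴) cosh y ≥ 3y² cosh y + y³ sinh y
  nlinarith [mul_le_mul_of_nonneg_left hsinh (by positivity : (0:ℝ) ≤ 3 * cosh y),
    mul_le_mul_of_nonneg_left (sinh_le_mul_cosh hy.le) (pow_nonneg hy.le 3)]

theorem sinh_div_self_le_cosh (x : ℝ) : sinh x / x ≤ cosh x := by
  wlog hx : 0 ≤ x generalizing x
  · simpa [neg_div_neg_eq] using this (-x) (by linarith)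
  rcases hx.eq_or_lt with rfl | hx
  · simp
  · rw [div_le_iff₀ hx]
    linarith [sinh_le_mul_cosh hx.le]

theorem cosh_le_sinh_div_self_pow_three {x : ℝ} (hx : x ≠ 0) : cosh x ≤ (sinh x / x) ^ 3 := by
  wlog hx₀ : 0 < x generalizing x
  · simpa [neg_div_neg_eq] using this (neg_ne_zero.2 hx) (by grind)
  rw [div_pow, le_div_iff₀ (by positivity)]
  linarith [pow_three_mul_cosh_le_sinh_pow_three hx₀.le]

theorem tanh_div_self_le_one (x : ℝ) : tanh x / x ≤ 1 := by
  rw [tanh_eq_sinh_div_cosh, div_right_comm, div_le_one (cosh_pos x)]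
  exact sinh_div_self_le_cosh x

theorem one_sub_tanh_sq_le_tanh_div_self_pow_three {x : ℝ} (hx : x ≠ 0) :
    1 - tanh x ^ 2 ≤ (tanh x / x) ^ 3 := by
  have hcosh := cosh_pos x
  have key : 1 - tanh x ^ 2 = cosh x / cosh x ^ 3 := by
    rw [tanh_eq_sinh_div_cosh]
    field_simp
    linarith [cosh_sq x]
  rw [key, tanh_eq_sinh_div_cosh, div_right_comm, div_pow]
  gcongr
  exact cosh_le_sinh_div_self_pow_three hx

theorem le_of_sq_le_pow_three {g θ : ℝ} (hθ : θ ≤ 1) (h : g ^ 2 ≤ θ ^ 3) : g ≤ θ := by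
  have hθ₀ : 0 ≤ θ := (Odd.pow_nonneg_iff (by decide)).1 ((sq_nonneg g).trans h)
  exact abs_le_of_sq_le_sq' (h.trans (by nlinarith)) hθ₀ |>.2

theorem le_div_sqrt_two_sub_of_sq_le_pow_three {g θ : ℝ} (hθ : θ ≤ 1) (h : g ^ 2 ≤ θ ^ 3) :
    g ≤ θ / √(2 - θ) := by
  have hθ₀ : 0 ≤ θ := (Odd.pow_nonneg_iff (by decide)).1 ((sq_nonneg g).trans h)
  calc g ≤ √(θ ^ 2 / (2 - θ)) := by
        refine le_sqrt_of_sq_le ?_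
        rw [le_div_iff₀ (by linarith)]
        nlinarith [mul_le_mul_of_nonneg_right h (by linarith : 0 ≤ 2 - θ), sq_nonneg (θ * (1 - θ))]
    _ = θ / √(2 - θ) := by rw [sqrt_div' _ (by linarith), sqrt_sq hθ₀]

/-- For `-1 < r < 1`, with `θ = μ(1−r, 1+r)` the logarithmic mean and
`G = √(1−r²)` the geometric mean, one has `G ≤ θ/√(2−θ)` and `G ≤ θ ≤ 1`. -/
theorem geom_le_logMean_bounds (r : ℝ) (hr : -1 < r) (hr' : r < 1) :
    Real.sqrt (1 - r ^ 2) ≤ logMean (1 - r) (1 + r) / Real.sqrt (2 - logMean (1 - r) (1 + r)) ∧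
    Real.sqrt (1 - r ^ 2) ≤ logMean (1 - r) (1 + r) ∧ logMean (1 - r) (1 + r) ≤ 1 := by
  rcases eq_or_ne r 0 with rfl | hr₀
  · norm_num [logMean_self]
  obtain ⟨u, hu, rfl⟩ : ∃ u ≠ 0, tanh u = r :=
    ⟨artanh r, by simp [artanh_eq_zero_iff, hr₀, hr.not_ge, hr'.not_ge], tanh_artanh ⟨hr, hr'⟩⟩
  rw [logMean_one_sub_one_add hr hr' hr₀, artanh_tanh]
  have hθ := tanh_div_self_le_one u
  have hcube : √(1 - tanh u ^ 2) ^ 2 ≤ (tanh u / u) ^ 3 := by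
    rw [sq_sqrt (by nlinarith [tanh_sq_lt_one u])]
    exact one_sub_tanh_sq_le_tanh_div_self_pow_three hu
  exact ⟨le_div_sqrt_two_sub_of_sq_le_pow_three hθ hcube, le_of_sq_le_pow_three hθ hcube, hθ⟩
end
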